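/- Let H1, H2, H3, H4 be subgroups of a finite group G with H2 ≤ H1. Then the Ingleton inequality holds for (H1, H2, H3, H4). -/

import Mathlib

/-!
Since `H2 ≤ H1`, every intersection with `H1 ⊓ H2` is an intersection with `H2`, and the Ingleton
inequality collapses to `|H1 ⊓ H3| |H1 ⊓ H4| ≤ |H1| |H3 ⊓ H4|`. This is the product formula
`|A| |B| = |AB| |A ⊓ B|` for `A = H1 ⊓ H3`, `B = H1 ⊓ H4`, together with `AB ⊆ H1` and
`A ⊓ B ≤ H3 ⊓ H4`; in the form used here, `AB ⊆ H1` becomes `[B : A ⊓ B] ≤ [H1 : A]`.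
-/

namespace Subgroup

variable {G : Type*} [Group G]

theorem card_inf_mul_relIndex (H K : Subgroup G) :
    Nat.card (H ⊓ K : Subgroup G) * H.relIndex K = Nat.card K := by
  rw [← relIndex_bot_left (H ⊓ K), ← relIndex_bot_left K, ← inf_relIndex_right H K,
    relIndex_mul_relIndex _ _ _ bot_le inf_le_right]

theorem card_mul_card_le_card_mul_card_inf {A B H : Subgroup G} [Finite H] (hA : A ≤ H)
    (hB : B ≤ H) : Nat.card A * Nat.card B ≤ Nat.card H * Nat.card (A ⊓ B : Subgroup G) := by
  have hH : Nat.card A * A.relIndex H = Nat.card H := by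
    simpa only [inf_eq_left.mpr hA] using card_inf_mul_relIndex A H
  have hAB : A.relIndex B ≤ A.relIndex H :=
    relIndex_le_of_le_right hB (A.subgroupOf H).index_ne_zero_of_finite
  calc Nat.card A * Nat.card B
      = Nat.card A * (Nat.card (A ⊓ B : Subgroup G) * A.relIndex B) := by
        rw [card_inf_mul_relIndex]
    _ ≤ Nat.card A * (Nat.card (A ⊓ B : Subgroup G) * A.relIndex H) := by gcongr
    _ = Nat.card H * Nat.card (A ⊓ B : Subgroup G) := by rw [← hH]; ring

theorem card_inf_mul_card_inf_le [Finite G] (K L M : Subgroup G) :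
    Nat.card (K ⊓ L : Subgroup G) * Nat.card (K ⊓ M : Subgroup G) ≤
      Nat.card K * Nat.card (L ⊓ M : Subgroup G) :=
  calc _ ≤ Nat.card K * Nat.card ((K ⊓ L) ⊓ (K ⊓ M) : Subgroup G) :=
        card_mul_card_le_card_mul_card_inf inf_le_left inf_le_left
    _ ≤ Nat.card K * Nat.card (L ⊓ M : Subgroup G) := by
        gcongr
        exact card_le_of_le (inf_le_inf inf_le_right inf_le_right)

end Subgroup

theorem stmt10 {G : Type*} [Group G] [Finite G] (H1 H2 H3 H4 : Subgroup G)
    (h : H2 ≤ H1) :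
    Nat.card (H1 : Subgroup G) * Nat.card (H2 : Subgroup G) * Nat.card (H3 ⊓ H4 : Subgroup G) * Nat.card (H1 ⊓ H2 ⊓ H3 : Subgroup G) * Nat.card (H1 ⊓ H2 ⊓ H4 : Subgroup G) ≥ Nat.card (H1 ⊓ H2 : Subgroup G) * Nat.card (H1 ⊓ H3 : Subgroup G) * Nat.card (H1 ⊓ H4 : Subgroup G) * Nat.card (H2 ⊓ H3 : Subgroup G) * Nat.card (H2 ⊓ H4 : Subgroup G) := by
  rw [inf_eq_right.mpr h]
  have key := Subgroup.card_inf_mul_card_inf_le H1 H3 H4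
  calc _ = Nat.card (H1 ⊓ H3 : Subgroup G) * Nat.card (H1 ⊓ H4 : Subgroup G) *
        (Nat.card H2 * Nat.card (H2 ⊓ H3 : Subgroup G) * Nat.card (H2 ⊓ H4 : Subgroup G)) := by
        ring
    _ ≤ Nat.card H1 * Nat.card (H3 ⊓ H4 : Subgroup G) *
        (Nat.card H2 * Nat.card (H2 ⊓ H3 : Subgroup G) * Nat.card (H2 ⊓ H4 : Subgroup G)) := by
        gcongr
    _ = _ := by ring
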